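/- arXiv:2107.02921 — 8 statements merged into one kernel-verified Lean document; each statement's English description precedes it below -/
import Mathlib

section
/- Let A be a connective E₁-ring and M' → M → M'' a fiber sequence of right A-module spectra. If M' and M'' are flat A-modules, then M is a flat A-module. -/
/-!
Since `θM''` is onto and `π₀M ⊗ πₙA → π₀M'' ⊗ πₙA` is onto (`g 0` is), every `g n` is onto;
hence all boundary maps `δ` vanish and the long exact sequence breaks into short exact
sequences `0 → πₙM' → πₙM → πₙM'' → 0`. Tensoring the one in degree `0` with `πₙA` gives a
right exact row mapping to the one in degree `n` by the comparison maps, and a diagram chase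
(the middle of the short five lemma) makes `θM n` bijective. Flatness of `π₀M` is the same chase
for `I ⊗ -` against `R ⊗ -`, with `I` an ideal.
-/

open scoped TensorProduct
open Function LinearMap

namespace LinearMap

variable {R : Type*} [Semiring R] {M₁ M₂ M₃ N₁ N₂ N₃ : Type*}
  [AddCommGroup M₁] [AddCommGroup M₂] [AddCommGroup M₃]
  [AddCommGroup N₁] [AddCommGroup N₂] [AddCommGroup N₃]
  [Module R M₁] [Module R M₂] [Module R M₃] [Module R N₁] [Module R N₂] [Module R N₃]
  {f₁ : M₁ →ₗ[R] M₂} {f₂ : M₂ →ₗ[R] M₃} {g₁ : N₁ →ₗ[R] N₂} {g₂ : N₂ →ₗ[R] N₃}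
  {i₁ : M₁ →ₗ[R] N₁} {i₂ : M₂ →ₗ[R] N₂} {i₃ : M₃ →ₗ[R] N₃}

lemma injective_of_injective_of_injective_of_exact (hc₁ : g₁ ∘ₗ i₁ = i₂ ∘ₗ f₁)
    (hc₂ : g₂ ∘ₗ i₂ = i₃ ∘ₗ f₂) (hf : Exact f₁ f₂) (hg₁ : Injective g₁)
    (hi₁ : Injective i₁) (hi₃ : Injective i₃) : Injective i₂ := by
  rw [injective_iff_map_eq_zero]
  intro x hx
  have hfx : f₂ x = 0 := hi₃ <| by
    rw [← comp_apply i₃, ← hc₂, comp_apply, hx, map_zero, map_zero]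
  obtain ⟨y, rfl⟩ := (hf x).1 hfx
  have hy : i₁ y = 0 := hg₁ <| by
    rw [← comp_apply g₁, hc₁, comp_apply, hx, map_zero]
  rw [hi₁ (hy.trans (map_zero i₁).symm), map_zero]

lemma surjective_of_surjective_of_surjective_of_exact (hc₁ : g₁ ∘ₗ i₁ = i₂ ∘ₗ f₁)
    (hc₂ : g₂ ∘ₗ i₂ = i₃ ∘ₗ f₂) (hg : Exact g₁ g₂) (hf₂ : Surjective f₂)
    (hi₁ : Surjective i₁) (hi₃ : Surjective i₃) : Surjective i₂ := by
  intro z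
  obtain ⟨x, hx⟩ := (hi₃.comp hf₂) (g₂ z)
  have hzx : g₂ (z - i₂ x) = 0 := by
    rw [map_sub, ← comp_apply g₂, hc₂]
    exact sub_eq_zero.2 hx.symm
  obtain ⟨w, hw⟩ := (hg _).1 hzx
  obtain ⟨y, rfl⟩ := hi₁ w
  refine ⟨x + f₁ y, ?_⟩
  rw [map_add, ← comp_apply i₂, ← hc₁, comp_apply, hw, add_sub_cancel]

end LinearMap

theorem Module.Flat.of_exact {R M' M M'' : Type*} [CommRing R]
    [AddCommGroup M'] [AddCommGroup M] [AddCommGroup M'']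
    [Module R M'] [Module R M] [Module R M''] [Module.Flat R M'] [Module.Flat R M'']
    {f : M' →ₗ[R] M} {g : M →ₗ[R] M''} (hf : Function.Injective f) (hfg : Exact f g)
    (hg : Surjective g) : Module.Flat R M := by
  rw [Module.Flat.iff_rTensor_injective']
  intro I
  -- ideal criterion: compare `I ⊗ M' → I ⊗ M → I ⊗ M''` with `R ⊗ M' → R ⊗ M → R ⊗ M''`,
  -- whose first map is `f` up to `R ⊗ - ≅ id`, hence injective
  refine injective_of_injective_of_injective_of_exact (f₁ := lTensor I f) (f₂ := lTensor I g)
    (g₁ := lTensor R f) (g₂ := lTensor R g) ?_ ?_ (_root_.lTensor_exact I hfg hg)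
    (Module.Flat.lTensor_preserves_injective_linearMap f hf)
    (Module.Flat.iff_rTensor_injective'.1 ‹_› I) (Module.Flat.iff_rTensor_injective'.1 ‹_› I) <;>
  rw [rTensor_comp_lTensor, lTensor_comp_rTensor]

/-- Let `A` be a connective `E₁`-ring and `M' → M → M''` a fiber sequence
of (connective) right `A`-module spectra.  If `M'` and `M''` are flat `A`-modules, then so
is `M`.

Since Mathlib has no spectra, we encode the situation faithfully on homotopy groups:
`R = π₀(A)` is a ring (taken commutative, as Mathlib's tensor products require), the higher
homotopy `πA n = πₙ(A)` are `R`-modules, and a connective module spectrum `N` is encoded by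
its homotopy groups `πN n` together with the canonical comparison maps
`θN n : π₀(N) ⊗_R πₙ(A) → πₙ(N)`.  Flatness in the sense of Lurie (HA 7.2.2.10) says that
`π₀(N)` is flat over `R` and every `θN n` is bijective.  A fiber sequence induces the long
exact homotopy sequence `⋯ → πₙ₊₁(M'') → πₙ(M') → πₙ(M) → πₙ(M'') → ⋯` (with
`π₀(M) → π₀(M'')` surjective, as `π₋₁(M') = 0`), compatibly with the comparison maps. -/
theorem stmt_2 (R : Type u) [CommRing R]
    (πA : ℕ → Type u) [∀ n, AddCommGroup (πA n)] [∀ n, Module R (πA n)]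
    (πM' πM πM'' : ℕ → Type u)
    [∀ n, AddCommGroup (πM' n)] [∀ n, Module R (πM' n)]
    [∀ n, AddCommGroup (πM n)] [∀ n, Module R (πM n)]
    [∀ n, AddCommGroup (πM'' n)] [∀ n, Module R (πM'' n)]
    (θM' : ∀ n, (πM' 0 ⊗[R] πA n) →ₗ[R] πM' n)
    (θM : ∀ n, (πM 0 ⊗[R] πA n) →ₗ[R] πM n)
    (θM'' : ∀ n, (πM'' 0 ⊗[R] πA n) →ₗ[R] πM'' n)
    (f : ∀ n, πM' n →ₗ[R] πM n) (g : ∀ n, πM n →ₗ[R] πM'' n)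
    (δ : ∀ n, πM'' (n + 1) →ₗ[R] πM' n)
    (hfg : ∀ n, Function.Exact (f n) (g n))
    (hgδ : ∀ n, Function.Exact (g (n + 1)) (δ n))
    (hδf : ∀ n, Function.Exact (δ n) (f n))
    (hg0 : Function.Surjective (g 0))
    (hf_nat : ∀ n, (f n).comp (θM' n) = (θM n).comp (LinearMap.rTensor (πA n) (f 0)))
    (hg_nat : ∀ n, (g n).comp (θM n) = (θM'' n).comp (LinearMap.rTensor (πA n) (g 0)))
    (hM'flat : Module.Flat R (πM' 0) ∧ ∀ n, Function.Bijective (θM' n))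
    (hM''flat : Module.Flat R (πM'' 0) ∧ ∀ n, Function.Bijective (θM'' n)) :
    Module.Flat R (πM 0) ∧ ∀ n, Function.Bijective (θM n) := by
  obtain ⟨hM'0, hθ'⟩ := hM'flat
  obtain ⟨hM''0, hθ''⟩ := hM''flat
  have hg0_tensor : ∀ n, Surjective (rTensor (πA n) (g 0)) :=
    fun n ↦ rTensor_surjective (πA n) hg0
  have hg : ∀ n, Surjective (g n) := fun n ↦ Surjective.of_comp (g := θM n) <| by
    rw [← coe_comp, hg_nat n, coe_comp]
    exact (hθ'' n).2.comp (hg0_tensor n)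
  have hf : ∀ n, Injective (f n) := fun n ↦
    (injective_iff_eq_zero_of_exact (hδf n)).2
      ((surjective_iff_eq_zero_of_exact (hgδ n)).1 (hg (n + 1)))
  refine ⟨Module.Flat.of_exact (hf 0) (hfg 0) hg0, fun n ↦ ⟨?_, ?_⟩⟩
  · exact injective_of_injective_of_injective_of_exact (hf_nat n) (hg_nat n)
      (rTensor_exact (πA n) (hfg 0) hg0) (hf n) (hθ' n).1 (hθ'' n).1
  · exact surjective_of_surjective_of_surjective_of_exact (hf_nat n) (hg_nat n) (hfg n)
      (hg0_tensor n) (hθ' n).2 (hθ'' n).2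
end

section
/- Let f : R → S be a map of commutative rings. Then f is faithfully flat if and only if f is flat, injective, and the cokernel of f (as a map of R-modules) is a flat R-module. -/
/-!
Everything comes from the short exact sequence `0 → R → S → S/R → 0`. If `S/R` is flat, the
sequence stays exact after tensoring with any `N`, so `N` embeds into `N ⊗ S` and `S` is faithful.
Conversely, faithful flatness makes `R → S` universally injective (`M → S ⊗ M` is injective), and a
diagram chase through `I ⊗ - → R ⊗ - → R/I ⊗ -` shows, using flatness of `S`, that
`I ⊗ S/R → R ⊗ S/R` is injective for every ideal `I`.
-/

open TensorProduct LinearMap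

section

variable {R M N P : Type*} [CommRing R] [AddCommGroup M] [AddCommGroup N] [AddCommGroup P]
  [Module R M] [Module R N] [Module R P]

lemma LinearMap.rTensor_lTensor_apply {A B : Type*} [AddCommGroup A] [AddCommGroup B]
    [Module R A] [Module R B] (f : A →ₗ[R] B) (g : M →ₗ[R] N) (z : A ⊗[R] M) :
    f.rTensor N (g.lTensor A z) = g.lTensor B (f.rTensor M z) := by
  rw [← LinearMap.comp_apply, rTensor_comp_lTensor, ← lTensor_comp_rTensor, LinearMap.comp_apply]

theorem Module.Flat.of_exact_of_lTensor_quotient_injective [Module.Flat R N]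
    {g : M →ₗ[R] N} {f : N →ₗ[R] P} (hgf : Function.Exact g f) (hf : Function.Surjective f)
    (hg : ∀ I : Ideal R, Function.Injective (g.lTensor (R ⧸ I))) : Module.Flat R P := by
  refine iff_rTensor_injective'.mpr fun I ↦ (injective_iff_map_eq_zero _).mpr fun x hx ↦ ?_
  obtain ⟨y, rfl⟩ := f.lTensor_surjective I hf x
  obtain ⟨z, hz⟩ : I.subtype.rTensor N y ∈ range (g.lTensor R) := by
    refine (_root_.lTensor_exact R hgf hf _).mp ?_
    rwa [← rTensor_lTensor_apply]
  obtain ⟨w, rfl⟩ : z ∈ range (I.subtype.rTensor M) := by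
    have hI := LinearMap.exact_subtype_mkQ I
    refine (_root_.rTensor_exact M hI I.mkQ_surjective z).mp (hg I ?_)
    rw [map_zero, ← rTensor_lTensor_apply, hz, ← LinearMap.comp_apply, ← rTensor_comp,
      hI.linearMap_comp_eq_zero, rTensor_zero, LinearMap.zero_apply]
  have hy : y = g.lTensor I w :=
    rTensor_preserves_injective_linearMap _ I.injective_subtype
      (by rw [rTensor_lTensor_apply, hz])
  rw [hy, ← LinearMap.comp_apply, ← lTensor_comp, hgf.linearMap_comp_eq_zero, lTensor_zero,
    LinearMap.zero_apply]

theorem Module.FaithfullyFlat.of_injective_of_exact_of_flat [Module.Flat R N] [Module.Flat R P]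
    {g : R →ₗ[R] N} {f : N →ₗ[R] P} (hgf : Function.Exact g f) (hf : Function.Surjective f)
    (hg : Function.Injective g) : Module.FaithfullyFlat R N := by
  refine (iff_flat_and_rTensor_faithful R N).mpr ⟨inferInstance, fun Q _ _ _ ↦ ?_⟩
  have : Nontrivial (Q ⊗[R] R) := (TensorProduct.rid R Q).toEquiv.nontrivial
  exact (lTensor_injective_of_exact_of_flat f hf g hg hgf Q).nontrivial

lemma Module.FaithfullyFlat.lTensor_algebraLinearMap_injective (S : Type*) [CommRing S]
    [Algebra R S] [Module.FaithfullyFlat R S] :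
    Function.Injective ((Algebra.linearMap R S).lTensor M) := by
  have h : (Algebra.linearMap R S).lTensor M =
      (TensorProduct.comm R S M).toLinearMap ∘ₗ TensorProduct.mk R S M 1 ∘ₗ
        (TensorProduct.rid R M).toLinearMap := by
    ext m
    simp
  rw [h]
  exact (TensorProduct.comm R S M).injective.comp
    ((tensorProduct_mk_injective M).comp (TensorProduct.rid R M).injective)

end

/-- Let `f : R → S` be a map of commutative rings.  Then `f` is faithfully
flat (i.e. `S` is a faithfully flat `R`-module via `f`) if and only if `f` is flat, injective,
and the cokernel of `f`, taken in the category of `R`-modules, is a flat `R`-module. -/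
theorem stmt_4 (R S : Type*) [CommRing R] [CommRing S] (f : R →+* S) :
    letI : Algebra R S := f.toAlgebra
    (Module.FaithfullyFlat R S ↔
      Module.Flat R S ∧ Function.Injective f ∧
        Module.Flat R (S ⧸ LinearMap.range (Algebra.linearMap R S))) := by
  let _ : Algebra R S := f.toAlgebra
  have hexact := LinearMap.exact_map_mkQ_range (Algebra.linearMap R S)
  have hmkQ := Submodule.mkQ_surjective (LinearMap.range (Algebra.linearMap R S))
  refine ⟨fun _ ↦ ⟨inferInstance, FaithfulSMul.algebraMap_injective R S, ?_⟩,
    fun ⟨_, hf, _⟩ ↦ .of_injective_of_exact_of_flat hexact hmkQ hf⟩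
  exact .of_exact_of_lTensor_quotient_injective hexact hmkQ fun I ↦
    Module.FaithfullyFlat.lTensor_algebraLinearMap_injective S
end

section
/- Let A be a commutative ring and I ⊆ A a quasiregular ideal, i.e., I/I² is a flat A/I-module and the cotangent complex L_{(A/I)/A} is equivalent to (I/I²)[1]. Then the canonical map of graded rings Sym*_{A/I}(I/I²) → ⊕ₙ Iⁿ/Iⁿ⁺¹ is an isomorphism. -/
/-!
Surjectivity holds because `Iⁿ` is spanned by the monomials of degree `n` in the generators.
Injectivity is Matsumura's Thm. 16.2: if `f₁, …, f_r` is weakly regular, a form `F` of degree `n`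
with `F(f) ∈ Iⁿ⁺¹` has all its coefficients in `I`. Subtracting a form with coefficients in `I` reduces to `F(f) = 0`; induct on `r`, then on
`n`. Write `F = F₀(X₁, …, X_{r-1}) + X_r H` and `I' = (f₁, …, f_{r-1})`. By quasi-regularity of
`f₁, …, f_{r-1}`, `f_r` stays regular modulo every `I'ᵐ`, so `f_r H(f) = -F₀(f)` forces
`H(f) ∈ I'ⁿ⁺¹`. Writing `H(f) = G(f)` with `G` of degree `n` and coefficients in `I'` gives the
coefficients of `H` by induction on `n`; writing `H(f) = T(f)` with `T` of degree `n + 1` in the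
first `r - 1` variables makes `F₀ + f_r T` a relation among `f₁, …, f_{r-1}`, which gives those
of `F₀`.
-/

open MvPolynomial

namespace MvPolynomial

variable {σ τ A : Type*} [CommRing A]

theorem mem_smul_homogeneousSubmodule_iff {J : Ideal A} {n : ℕ} {p : MvPolynomial σ A} :
    p ∈ J • homogeneousSubmodule σ A n ↔
      p ∈ homogeneousSubmodule σ A n ∧ p ∈ Ideal.map C J := by
  refine ⟨fun hp => ⟨Submodule.smul_le_right hp, ?_⟩, fun ⟨hp, hpJ⟩ => ?_⟩
  · refine Submodule.smul_induction_on hp (fun a ha q _ => ?_) fun _ _ => add_mem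
    rw [smul_eq_C_mul]
    exact Ideal.mul_mem_right _ _ (Ideal.mem_map_of_mem C ha)
  · rw [p.as_sum]
    refine Submodule.sum_mem _ fun d hd => ?_
    rw [← mul_one (coeff d p), ← smul_eq_mul, ← smul_monomial]
    exact Submodule.smul_mem_smul (mem_map_C_iff.mp hpJ d)
      (isHomogeneous_monomial 1 (hp.degree_eq_sum_deg_support hd).symm)

theorem eq_zero_of_mem_homogeneousSubmodule_zero {f : σ → A} {p : MvPolynomial σ A}
    (hp : p ∈ homogeneousSubmodule σ A 0) (h : aeval f p = 0) : p = 0 := by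
  rw [homogeneousSubmodule_zero, Submodule.mem_one] at hp
  obtain ⟨a, rfl⟩ := hp
  rw [AlgHom.commutes, Algebra.algebraMap_self_apply] at h
  simp [h]

theorem rename_mem_map_C {g : σ → τ} {J : Ideal A} {p : MvPolynomial σ A}
    (hp : p ∈ Ideal.map C J) : rename g p ∈ Ideal.map C J := by
  have h := Ideal.mem_map_of_mem (rename g : MvPolynomial σ A →ₐ[A] MvPolynomial τ A).toRingHom hp
  rwa [Ideal.map_map, show (rename g).toRingHom.comp C = C from RingHom.ext (rename_C g)] at h

theorem exists_eq_rename_castSucc_add_X_last_mul {r n : ℕ}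
    {p : MvPolynomial (Fin (r + 1)) A} (hp : p ∈ homogeneousSubmodule (Fin (r + 1)) A (n + 1)) :
    ∃ p₀ ∈ homogeneousSubmodule (Fin r) A (n + 1), ∃ q ∈ homogeneousSubmodule (Fin (r + 1)) A n,
      p = rename Fin.castSucc p₀ + X (Fin.last r) * q := by
  suffices h : homogeneousSubmodule (Fin (r + 1)) A (n + 1) ≤
      (homogeneousSubmodule (Fin r) A (n + 1)).map (rename Fin.castSucc).toLinearMap ⊔
        (homogeneousSubmodule (Fin (r + 1)) A n).map (LinearMap.mulLeft A (X (Fin.last r))) by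
    obtain ⟨_, ⟨p₀, hp₀, rfl⟩, _, ⟨q, hq, rfl⟩, rfl⟩ := Submodule.mem_sup.mp (h hp)
    exact ⟨p₀, hp₀, q, hq, rfl⟩
  rw [homogeneousSubmodule_eq_finsupp_supported, AddMonoidAlgebra.supported_eq_span_single,
    Submodule.span_le]
  rintro _ ⟨d, hd, rfl⟩
  rw [Set.mem_ofPred_eq] at hd
  rw [SetLike.mem_coe]
  change monomial d 1 ∈ _
  by_cases hlast : d (Fin.last r) = 0
  · refine Submodule.mem_sup_left ⟨monomial (Finsupp.equivFunOnFinite.symm (d ∘ Fin.castSucc)) 1,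
      isHomogeneous_monomial _ ?_, ?_⟩
    · rw [← hd, Finsupp.degree_eq_sum, Finsupp.degree_eq_sum, Fin.sum_univ_castSucc, hlast]
      simp
    · rw [AlgHom.toLinearMap_apply, rename_monomial]
      refine congrArg (monomial · 1) (Finsupp.ext fun i => ?_)
      induction i using Fin.lastCases with
      | last =>
        rw [hlast, Finsupp.mapDomain_of_notMem_range]
        simp [Fin.range_castSucc]
      | cast j =>
        rw [Finsupp.mapDomain_apply (Fin.castSucc_injective r)]
        rfl
  · have hle : Finsupp.single (Fin.last r) 1 ≤ d := by
      rw [Finsupp.single_le_iff]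
      omega
    refine Submodule.mem_sup_right ⟨monomial (d - Finsupp.single (Fin.last r) 1) 1,
      isHomogeneous_monomial _ ?_, ?_⟩
    · have := congrArg Finsupp.degree (add_tsub_cancel_of_le hle)
      rw [map_add, Finsupp.degree_single, hd] at this
      omega
    · rw [LinearMap.mulLeft_apply, ← pow_one (X _), ← monomial_single_add,
        add_tsub_cancel_of_le hle]

end MvPolynomial

namespace Ideal

variable {σ A : Type*} [CommRing A]

theorem aeval_mem_span_pow {f : σ → A} {n : ℕ} {p : MvPolynomial σ A}
    (hp : p ∈ homogeneousSubmodule σ A n) : aeval f p ∈ span (Set.range f) ^ n := by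
  rw [span_pow_eq_map_homogeneousSubmodule]
  exact Submodule.mem_map_of_mem hp

theorem mem_mul_span_pow_iff {f : σ → A} {J : Ideal A} {n : ℕ} {x : A} :
    x ∈ J * span (Set.range f) ^ n ↔
      ∃ p ∈ homogeneousSubmodule σ A n, p ∈ map C J ∧ aeval f p = x := by
  rw [span_pow_eq_map_homogeneousSubmodule, ← smul_eq_mul, ← Submodule.map_smul'',
    Submodule.mem_map]
  simp only [mem_smul_homogeneousSubmodule_iff, and_assoc]
  rfl

theorem span_range_pow_eq_span_prod_pow {ι : Type*} [Fintype ι] (f : ι → A) (n : ℕ) :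
    span (Set.range f) ^ n = span {b | ∃ e : ι → ℕ, ∑ j, e j = n ∧ b = ∏ j, f j ^ e j} := by
  rw [span_pow_eq_map_homogeneousSubmodule, homogeneousSubmodule_eq_finsupp_supported,
    AddMonoidAlgebra.supported_eq_span_single, Submodule.map_span]
  congr 1
  ext b
  simp only [Set.mem_image, Set.mem_ofPred_eq, exists_exists_and_eq_and, single_eq_monomial,
    AlgHom.toLinearMap_apply, aeval_monomial, map_one, one_mul,
    Finsupp.prod_fintype _ _ fun _ => pow_zero _]
  constructor
  · rintro ⟨d, hd, rfl⟩
    exact ⟨d, by rwa [← Finsupp.degree_eq_sum], rfl⟩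
  · rintro ⟨e, he, rfl⟩
    exact ⟨Finsupp.equivFunOnFinite.symm e, by rwa [Finsupp.degree_eq_sum], rfl⟩

theorem ofList_ofFn {r : ℕ} (f : Fin r → A) : ofList (List.ofFn f) = span (Set.range f) := by
  simp only [ofList, List.mem_ofFn', Set.ofPred_mem_eq]

end Ideal

namespace RingTheory.Sequence

variable {σ A : Type*} [CommRing A]

/-- Classical quasi-regularity of a family `f` generating `I`: the graded map
`(A ⧸ I)[X] → ⊕ₙ Iⁿ/Iⁿ⁺¹`, `Xⱼ ↦ fⱼ`, is injective. -/
def IsQuasiRegular (f : σ → A) : Prop :=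
  ∀ n, ∀ p ∈ homogeneousSubmodule σ A n,
    aeval f p ∈ Ideal.span (Set.range f) ^ (n + 1) → p ∈ Ideal.map C (Ideal.span (Set.range f))

theorem IsQuasiRegular.of_aeval_eq_zero {f : σ → A}
    (h : ∀ n, ∀ p ∈ homogeneousSubmodule σ A n,
      aeval f p = 0 → p ∈ Ideal.map C (Ideal.span (Set.range f))) :
    IsQuasiRegular f := by
  intro n p hp hpI
  rw [pow_succ', Ideal.mem_mul_span_pow_iff] at hpI
  obtain ⟨q, hq, hqI, hqp⟩ := hpI
  have hpq := h n (p - q) (sub_mem hp hq) (by rw [map_sub, hqp, sub_self])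
  simpa using add_mem hpq hqI

theorem IsQuasiRegular.mem_pow_of_mul_mem_pow {f : σ → A} (hf : IsQuasiRegular f) {g : A}
    (hg : ∀ a, g * a ∈ Ideal.span (Set.range f) → a ∈ Ideal.span (Set.range f)) (n : ℕ) {a : A}
    (ha : g * a ∈ Ideal.span (Set.range f) ^ n) : a ∈ Ideal.span (Set.range f) ^ n := by
  induction n generalizing a with
  | zero => simp
  | succ n ih =>
    have ha' := ih (Ideal.pow_le_pow_right n.le_succ ha)
    rw [Ideal.span_pow_eq_map_homogeneousSubmodule] at ha'
    obtain ⟨p, hp, rfl⟩ := ha'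
    have hgp : C g * p ∈ Ideal.map C (Ideal.span (Set.range f)) := by
      refine hf n _ ?_ (by simpa using ha)
      rw [← smul_eq_C_mul]
      exact Submodule.smul_mem _ g hp
    have hpI : p ∈ Ideal.map C (Ideal.span (Set.range f)) :=
      mem_map_C_iff.mpr fun m => hg _ (by simpa using mem_map_C_iff.mp hgp m)
    rw [pow_succ', Ideal.mem_mul_span_pow_iff]
    exact ⟨p, hp, hpI, rfl⟩

theorem isQuasiRegular_of_isEmpty [IsEmpty σ] (f : σ → A) : IsQuasiRegular f := by
  refine IsQuasiRegular.of_aeval_eq_zero fun n p _ hp => ?_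
  rw [aeval_injective_iff_of_isEmpty.mpr Function.injective_id (hp.trans (map_zero _).symm)]
  exact zero_mem _

theorem IsQuasiRegular.of_castSucc {r : ℕ} {f : Fin (r + 1) → A}
    (hf : IsQuasiRegular (f ∘ Fin.castSucc))
    (hg : ∀ a, f (Fin.last r) * a ∈ Ideal.span (Set.range (f ∘ Fin.castSucc)) →
      a ∈ Ideal.span (Set.range (f ∘ Fin.castSucc))) :
    IsQuasiRegular f := by
  set I := Ideal.span (Set.range f)
  set I' := Ideal.span (Set.range (f ∘ Fin.castSucc))
  set g := f (Fin.last r)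
  have hI'C : Ideal.map C I' ≤ Ideal.map (C : A →+* MvPolynomial (Fin r) A) I :=
    Ideal.map_mono (Ideal.span_mono (Set.range_comp_subset_range _ _))
  refine IsQuasiRegular.of_aeval_eq_zero fun n => ?_
  induction n with
  | zero =>
    intro p hp hp0
    rw [eq_zero_of_mem_homogeneousSubmodule_zero hp hp0]
    exact zero_mem _
  | succ n ih =>
    intro p hp hp0
    obtain ⟨p₀, hp₀, q, hq, rfl⟩ := exists_eq_rename_castSucc_add_X_last_mul hp
    rw [map_add, map_mul, aeval_rename, aeval_X] at hp0
    have hq_pow : aeval f q ∈ I' ^ (n + 1) := by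
      refine hf.mem_pow_of_mul_mem_pow hg (n + 1) ?_
      rw [eq_neg_of_add_eq_zero_right hp0]
      exact neg_mem (Ideal.aeval_mem_span_pow hp₀)
    have hqI : q ∈ Ideal.map C I := by
      rw [pow_succ', Ideal.mem_mul_span_pow_iff] at hq_pow
      obtain ⟨s, hs, hsI, hsq⟩ := hq_pow
      have hs' := IsHomogeneous.rename_isHomogeneous (f := Fin.castSucc) hs
      have hqs := ih (q - rename Fin.castSucc s) (sub_mem hq hs')
        (by rw [map_sub, aeval_rename, hsq, sub_self])
      simpa using add_mem hqs (rename_mem_map_C (g := Fin.castSucc) (hI'C hsI))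
    have hp₀I : p₀ ∈ Ideal.map C I := by
      rw [Ideal.span_pow_eq_map_homogeneousSubmodule] at hq_pow
      obtain ⟨t, ht, htq⟩ := hq_pow
      rw [AlgHom.toLinearMap_apply] at htq
      have hp₀t := hf (n + 1) (p₀ + C g * t)
        (add_mem hp₀ (by rw [← smul_eq_C_mul]; exact Submodule.smul_mem _ _ ht))
        (by rw [map_add, map_mul, aeval_C, Algebra.algebraMap_self_apply, htq, hp0]
            exact zero_mem _)
      have hgt : C g * t ∈ Ideal.map C I :=
        Ideal.mul_mem_right _ _ (Ideal.mem_map_of_mem C (Ideal.subset_span ⟨_, rfl⟩))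
      simpa using sub_mem (hI'C hp₀t) hgt
    exact add_mem (rename_mem_map_C hp₀I) (Ideal.mul_mem_left _ _ hqI)

theorem IsWeaklyRegular.isQuasiRegular :
    ∀ {r : ℕ} {f : Fin r → A}, IsWeaklyRegular A (List.ofFn f) → IsQuasiRegular f
  | 0, f, _ => isQuasiRegular_of_isEmpty f
  | r + 1, f, hf => by
    rw [List.ofFn_succ', List.concat_eq_append, isWeaklyRegular_append_iff,
      isWeaklyRegular_singleton_iff, Ideal.ofList_ofFn, Ideal.smul_eq_mul, Ideal.mul_top] at hf
    exact .of_castSucc hf.1.isQuasiRegular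
      ((isSMulRegular_quotient_iff_mem_of_smul_mem _ _).mp hf.2)

theorem IsQuasiRegular.coeff_mem_of_sum_mem_pow {ι : Type*} [Fintype ι] {f : ι → A}
    (hf : IsQuasiRegular f) {n : ℕ} (E : Finset (ι → ℕ)) (c : (ι → ℕ) → A)
    (hE : ∀ e ∈ E, ∑ j, e j = n)
    (h : ∑ e ∈ E, c e * ∏ j, f j ^ e j ∈ Ideal.span (Set.range f) ^ (n + 1)) :
    ∀ e ∈ E, c e ∈ Ideal.span (Set.range f) := by
  classical
  let p := ∑ e ∈ E, monomial (Finsupp.equivFunOnFinite.symm e) (c e)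
  have hp : p ∈ homogeneousSubmodule ι A n :=
    Submodule.sum_mem _ fun e he =>
      isHomogeneous_monomial _ (by rw [Finsupp.degree_eq_sum]; exact hE e he)
  have hpf : aeval f p = ∑ e ∈ E, c e * ∏ j, f j ^ e j := by
    simp [p, aeval_monomial, Finsupp.prod_fintype]
  intro e he
  have hpI := mem_map_C_iff.mp (hf n p hp (hpf ▸ h)) (Finsupp.equivFunOnFinite.symm e)
  simpa [p, coeff_sum, coeff_monomial, he] using hpI

end RingTheory.Sequence

theorem stmt_5_general (A : Type*) [CommRing A] (I : Ideal A)
    (r : ℕ) (f : Fin r → A) (hgen : Ideal.span (Set.range f) = I)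
    (hreg : RingTheory.Sequence.IsRegular A (List.ofFn f)) :
    ∀ n : ℕ,
      ((I ^ n : Ideal A) =
          I ^ (n + 1) ⊔ Ideal.span {b | ∃ e : Fin r → ℕ, (∑ j, e j) = n ∧ b = ∏ j, f j ^ e j}) ∧
      ∀ (E : Finset (Fin r → ℕ)) (c : (Fin r → ℕ) → A),
        (∀ e ∈ E, (∑ j, e j) = n) →
        (∑ e ∈ E, c e * ∏ j, f j ^ e j) ∈ I ^ (n + 1) →
        ∀ e ∈ E, c e ∈ I := by
  subst hgen
  intro n
  refine ⟨?_, hreg.toIsWeaklyRegular.isQuasiRegular.coeff_mem_of_sum_mem_pow⟩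
  rw [← Ideal.span_range_pow_eq_span_prod_pow, sup_eq_right.mpr (Ideal.pow_le_pow_right n.le_succ)]

/-- Let `A` be a commutative ring and `I ⊆ A` a quasiregular ideal, i.e.
`I/I²` is a flat `A/I`-module and the cotangent complex `L_{(A/I)/A}` is equivalent to
`(I/I²)[1]`.  Then the canonical map of graded rings
`Sym*_{A/I}(I/I²) → ⊕ₙ Iⁿ/Iⁿ⁺¹` is an isomorphism.

Mathlib has neither the cotangent complex nor (hence) Quillen's notion of quasiregularity;
as a formal surrogate for the cotangent-complex condition we assume that `I` is generated
by a (Koszul-)regular sequence `f₁, …, f_r` (such ideals are quasiregular, and then `I/I²`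
is free on the classes of the `fⱼ`).  The flatness half of quasiregularity is kept as the
hypothesis `hflat`.  Since `Symⁿ_{A/I}(I/I²)` is then free on the monomials `f^e` with
`|e| = n`, the conclusion "`Symⁿ(I/I²) → Iⁿ/Iⁿ⁺¹` is an isomorphism" is spelled out as:
the monomials of exact degree `n` generate `Iⁿ` modulo `Iⁿ⁺¹` (surjectivity), and any
`A`-linear combination of them lying in `Iⁿ⁺¹` has all its coefficients in `I`
(injectivity). -/
theorem stmt_5 (A : Type*) [CommRing A] (I : Ideal A)
    (hflat : Module.Flat (A ⧸ I) I.Cotangent)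
    (r : ℕ) (f : Fin r → A) (hgen : Ideal.span (Set.range f) = I)
    (hreg : RingTheory.Sequence.IsRegular A (List.ofFn f)) :
    ∀ n : ℕ,
      ((I ^ n : Ideal A) =
          I ^ (n + 1) ⊔ Ideal.span {b | ∃ e : Fin r → ℕ, (∑ j, e j) = n ∧ b = ∏ j, f j ^ e j}) ∧
      ∀ (E : Finset (Fin r → ℕ)) (c : (Fin r → ℕ) → A),
        (∀ e ∈ E, (∑ j, e j) = n) →
        (∑ e ∈ E, c e * ∏ j, f j ^ e j) ∈ I ^ (n + 1) →
        ∀ e ∈ E, c e ∈ I :=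
  stmt_5_general A I r f hgen hreg
end

section
/- Let A be a δ-ring, d ∈ A, and u ∈ A an invertible element. Then the principal ideals generated by the images of δ(d) and δ(ud) in A/(d) coincide. In particular, if d is a non-zero-divisor, the ideal δ(d)·(A/(d)) depends only on the ideal (d) and not on the choice of generator d. -/
/-- A `δ`-ring (relative to the prime `p`): a commutative ring `R` together with an
operation `δ : R → R` satisfying `δ(1) = 0`, the additivity law
`δ(x+y) = δ(x) + δ(y) - ∑_{j=1}^{p-1} (1/p)·C(p,j)·x^{p-j}·y^j`
(note that `C(p,j)/p` is an integer for `0 < j < p` when `p` is prime), and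
`δ(xy) = x^p δ(y) + y^p δ(x) + p δ(x) δ(y)`. -/
class DeltaRing (p : ℕ) (R : Type*) [CommRing R] where
  δ : R → R
  δ_one : δ 1 = 0
  δ_add : ∀ x y : R, δ (x + y) =
    δ x + δ y - ∑ j ∈ Finset.Ioo 0 p, ((p.choose j / p : ℕ) : R) * x ^ (p - j) * y ^ j
  δ_mul : ∀ x y : R, δ (x * y) = x ^ p * δ y + y ^ p * δ x + (p : R) * δ x * δ y

/-- The Frobenius lift `φ(x) = x^p + p·δ(x)` associated to a `δ`-structure; it is a ring
endomorphism lifting the Frobenius modulo `p`. -/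
def DeltaRing.phi (p : ℕ) (R : Type*) [CommRing R] [DeltaRing p R] : R → R :=
  fun x => x ^ p + (p : R) * DeltaRing.δ (p := p) x

/-!
Since `δ(xy) = x^p δ(y) + y^p δ(x) + p δ(x) δ(y)`, one has the exact identity
`δ(ud) = φ(u) δ(d) + d^p δ(u)`, so modulo `d` the element `δ(ud)` is `φ(u) δ(d)`; and `φ`,
being multiplicative with `φ(1) = 1`, sends units to units. If `d` is a non-zero-divisor, any
other generator of `(d)` is of the form `ud` with `u` a unit.
-/

namespace DeltaRing

variable {p : ℕ} {R : Type*} [CommRing R] [DeltaRing p R]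

theorem phi_one : phi p R 1 = 1 := by
  simp [phi, δ_one]

theorem phi_mul (x y : R) : phi p R (x * y) = phi p R x * phi p R y := by
  simp only [phi, δ_mul, mul_pow]
  ring

variable (p R) in
def phiMonoidHom : R →* R where
  toFun := phi p R
  map_one' := phi_one
  map_mul' := phi_mul

theorem isUnit_phi {u : R} (hu : IsUnit u) : IsUnit (phi p R u) :=
  hu.map (phiMonoidHom p R)

theorem δ_mul_eq_phi_mul_add (x d : R) :
    δ (p := p) (x * d) = phi p R x * δ (p := p) d + d ^ p * δ (p := p) x := by
  rw [δ_mul, phi]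
  ring

theorem mk_δ_mul_eq_mk_phi_mul (hp : p ≠ 0) (x d : R) :
    Ideal.Quotient.mk (Ideal.span {d}) (δ (p := p) (x * d)) =
      Ideal.Quotient.mk (Ideal.span {d}) (phi p R x) *
        Ideal.Quotient.mk (Ideal.span {d}) (δ (p := p) d) := by
  have hd : Ideal.Quotient.mk (Ideal.span {d}) d = 0 :=
    Ideal.Quotient.eq_zero_iff_mem.mpr (Ideal.mem_span_singleton_self d)
  rw [δ_mul_eq_phi_mul_add, map_add, map_mul, map_mul, map_pow, hd, zero_pow hp, zero_mul,
    add_zero]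

theorem span_mk_δ_unit_mul (hp : p ≠ 0) {u : R} (hu : IsUnit u) (d : R) :
    Ideal.span {Ideal.Quotient.mk (Ideal.span {d}) (δ (p := p) (u * d))} =
      Ideal.span {Ideal.Quotient.mk (Ideal.span {d}) (δ (p := p) d)} := by
  rw [mk_δ_mul_eq_mk_phi_mul hp]
  exact Ideal.span_singleton_mul_left_unit ((isUnit_phi hu).map _) _

end DeltaRing

theorem Ideal.exists_isUnit_mul_eq_of_span_singleton_eq {R : Type*} [CommRing R] {d d' : R}
    (hd : d ∈ nonZeroDivisors R) (h : Ideal.span {d'} = Ideal.span {d}) :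
    ∃ u, IsUnit u ∧ u * d = d' := by
  obtain ⟨a, ha⟩ := Ideal.span_singleton_le_span_singleton.mp h.ge
  obtain ⟨b, hb⟩ := Ideal.span_singleton_le_span_singleton.mp h.le
  have hab : a * b = 1 := by
    refine (mul_cancel_right_mem_nonZeroDivisors hd).mp ?_
    calc a * b * d = d * b * a := by ring
      _ = 1 * d := by rw [← hb, ← ha, one_mul]
  exact ⟨b, .of_mul_eq_one a (by rw [mul_comm, hab]), by rw [hb, mul_comm]⟩

/-- Let `A` be a `δ`-ring, `d ∈ A`, and `u ∈ A` invertible.  Then the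
principal ideals generated by the images of `δ(ud)` and `δ(d)` in `A/(d)` coincide.
In particular, if `d` is a non-zero-divisor, the ideal `δ(d)·(A/(d))` depends only on
the ideal `(d)` and not on the choice of generator. -/
theorem stmt_9 (p : ℕ) [Fact p.Prime] (A : Type*) [CommRing A] [DeltaRing p A]
    (d u : A) (hu : IsUnit u) :
    (Ideal.span {Ideal.Quotient.mk (Ideal.span {d}) (DeltaRing.δ (p := p) (u * d))} =
      Ideal.span {Ideal.Quotient.mk (Ideal.span {d}) (DeltaRing.δ (p := p) d)}) ∧
    (d ∈ nonZeroDivisors A → ∀ d' : A, Ideal.span {d'} = Ideal.span {d} →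
      Ideal.span {Ideal.Quotient.mk (Ideal.span {d}) (DeltaRing.δ (p := p) d')} =
        Ideal.span {Ideal.Quotient.mk (Ideal.span {d}) (DeltaRing.δ (p := p) d)}) := by
  have hp : p ≠ 0 := (Fact.out : p.Prime).ne_zero
  refine ⟨DeltaRing.span_mk_δ_unit_mul hp hu d, fun hd d' hspan => ?_⟩
  obtain ⟨v, hv, rfl⟩ := Ideal.exists_isUnit_mul_eq_of_span_singleton_eq hd hspan
  exact DeltaRing.span_mk_δ_unit_mul hp hv d
end

section
/- Let A be a δ-ring in which p lies in the Jacobson radical, and let d ∈ A be weakly distinguished (i.e., (d, δ(d)) = A). Then for every n ≥ 0, the image of φⁿ(δ(d)) in A/(d) is invertible, where φ is the Frobenius lift of the δ-structure. -/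
/-!
Modulo `d` the element `δ(d)` is a unit, since `(d, δ(d)) = A`. Because `φ(x) = x^p + p δ(x)`
and `p` stays in the Jacobson radical of `A/(d)`, `φ` maps elements that are units modulo `d`
to elements that are units modulo `d`; iterate.
-/

namespace Ideal

variable {R S : Type*} [CommRing R] [CommRing S]

theorem isUnit_add_of_mem_jacobson_bot {u j : R} (hu : IsUnit u) (hj : j ∈ jacobson (⊥ : Ideal R)) :
    IsUnit (u + j) := by
  obtain ⟨v, rfl⟩ := hu
  have hunit : IsUnit (j * ↑v⁻¹ + 1) := mem_jacobson_bot.mp hj _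
  have hfactor : (v : R) + j = (j * ↑v⁻¹ + 1) * v := by
    rw [add_mul, mul_assoc, Units.inv_mul, mul_one, one_mul, add_comm]
  exact hfactor ▸ hunit.mul v.isUnit

theorem map_mem_jacobson_bot_of_surjective {f : R →+* S} (hf : Function.Surjective f) {x : R}
    (hx : x ∈ jacobson (⊥ : Ideal R)) : f x ∈ jacobson (⊥ : Ideal S) := by
  rw [mem_jacobson_bot] at hx ⊢
  intro y
  obtain ⟨z, rfl⟩ := hf y
  simpa using (hx z).map f

theorem Quotient.isUnit_mk_of_span_pair_eq_top {a b : R} (h : span {a, b} = ⊤) :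
    IsUnit (Quotient.mk (span {a}) b) := by
  obtain ⟨r, s, hrs⟩ := mem_span_pair.mp (h ▸ Submodule.mem_top : (1 : R) ∈ span {a, b})
  have ha : Quotient.mk (span {a}) a = 0 := Quotient.eq_zero_iff_mem.mpr (mem_span_singleton_self a)
  refine IsUnit.of_mul_eq_one (Quotient.mk _ s) ?_
  simpa [ha, mul_comm] using congrArg (Quotient.mk (span {a})) hrs

end Ideal

namespace DeltaRing

variable {p : ℕ} {A B : Type*} [CommRing A] [DeltaRing p A] [CommRing B]

theorem isUnit_map_phi {f : A →+* B} (hp : f p ∈ Ideal.jacobson (⊥ : Ideal B)) {x : A}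
    (hx : IsUnit (f x)) : IsUnit (f (phi p A x)) := by
  have hphi : f (phi p A x) = f x ^ p + f p * f (δ (p := p) x) := by
    simp [phi]
  exact hphi ▸ Ideal.isUnit_add_of_mem_jacobson_bot (hx.pow p) (Ideal.mul_mem_right _ _ hp)

theorem isUnit_map_iterate_phi {f : A →+* B} (hp : f p ∈ Ideal.jacobson (⊥ : Ideal B)) {x : A}
    (hx : IsUnit (f x)) (n : ℕ) : IsUnit (f ((phi p A)^[n] x)) := by
  induction n with
  | zero => exact hx
  | succ n ih => exact Function.iterate_succ_apply' (phi p A) n x ▸ isUnit_map_phi hp ih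

end DeltaRing

theorem stmt_10_general (p : ℕ) (A : Type*) [CommRing A] [DeltaRing p A]
    (hp : (p : A) ∈ Ideal.jacobson (⊥ : Ideal A))
    (d : A) (hd : Ideal.span {d, DeltaRing.δ (p := p) d} = ⊤) :
    ∀ n : ℕ,
      IsUnit (Ideal.Quotient.mk (Ideal.span {d})
        ((DeltaRing.phi p A)^[n] (DeltaRing.δ (p := p) d))) :=
  DeltaRing.isUnit_map_iterate_phi
    (by simpa using Ideal.map_mem_jacobson_bot_of_surjective Ideal.Quotient.mk_surjective hp)
    (Ideal.Quotient.isUnit_mk_of_span_pair_eq_top hd)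

/-- Let `A` be a `δ`-ring in which `p` lies in the Jacobson radical,
and let `d ∈ A` be *weakly distinguished*, i.e. `(d, δ(d)) = A`.  Then for every `n ≥ 0`
the image of `φⁿ(δ(d))` in `A/(d)` is invertible, where `φ` is the Frobenius lift of the
`δ`-structure. -/
theorem stmt_10 (p : ℕ) [Fact p.Prime] (A : Type*) [CommRing A] [DeltaRing p A]
    (hp : (p : A) ∈ Ideal.jacobson (⊥ : Ideal A))
    (d : A) (hd : Ideal.span {d, DeltaRing.δ (p := p) d} = ⊤) :
    ∀ n : ℕ,
      IsUnit (Ideal.Quotient.mk (Ideal.span {d})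
        ((DeltaRing.phi p A)^[n] (DeltaRing.δ (p := p) d))) :=
  stmt_10_general p A hp d hd
end

section
/- Let A be a δ-ring with p in the Jacobson radical and d ∈ A weakly distinguished. Then for every n ≥ 1, there exists a unit u of A/(d) such that φⁿ(d) ≡ p·u (mod d). More precisely, one can construct elements uₙ ∈ A whose images in A/(d) are invertible, with φⁿ(d) − d^{pⁿ} = p·uₙ. -/
theorem IsUnit.add_of_mem_jacobson_bot {R : Type*} [CommRing R] {a b : R} (ha : IsUnit a)
    (hb : b ∈ Ideal.jacobson (⊥ : Ideal R)) : IsUnit (a + b) := by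
  obtain ⟨a', ha'⟩ := ha.exists_right_inv
  have he : a + b = a * (b * a' + 1) := by linear_combination (-b) * ha'
  rw [he]
  exact ha.mul (Ideal.mem_jacobson_bot.mp hb a')

theorem Ideal.map_mem_jacobson_bot_of_surjective_s11 {R S : Type*} [CommRing R] [CommRing S]
    {f : R →+* S} (hf : Function.Surjective f) {x : R} (hx : x ∈ Ideal.jacobson (⊥ : Ideal R)) :
    f x ∈ Ideal.jacobson (⊥ : Ideal S) := by
  rw [Ideal.mem_jacobson_bot] at hx ⊢
  intro y
  obtain ⟨z, rfl⟩ := hf y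
  simpa using (hx z).map f

theorem Ideal.Quotient.isUnit_mk_of_span_pair_eq_top_s11 {R : Type*} [CommRing R] {a b : R}
    (h : Ideal.span {a, b} = ⊤) : IsUnit (Ideal.Quotient.mk (Ideal.span {a}) b) := by
  obtain ⟨x, y, hxy⟩ := Ideal.mem_span_pair.mp (h ▸ Submodule.mem_top : (1 : R) ∈ _)
  refine IsUnit.of_mul_eq_one (Ideal.Quotient.mk _ y) ?_
  rw [← map_mul, ← map_one (Ideal.Quotient.mk _), Ideal.Quotient.eq]
  exact Ideal.mem_span_singleton.mpr ⟨-x, by linear_combination hxy⟩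

namespace DeltaRing

variable {p : ℕ} {R : Type*} [CommRing R] [DeltaRing p R]

theorem phi_apply (x : R) : phi p R x = x ^ p + p * δ (p := p) x := rfl

theorem δ_zero : δ (p := p) (0 : R) = 0 := by
  have h := δ_add (p := p) (0 : R) 0
  rw [add_zero, Finset.sum_eq_zero fun j hj => by
    rw [zero_pow (Finset.mem_Ioo.mp hj).1.ne', mul_zero]] at h
  linear_combination -h

theorem isUnit_mk_phi_add_mul {I : Ideal R} (hp : (p : R ⧸ I) ∈ Ideal.jacobson ⊥) {u : R}
    (hu : IsUnit (Ideal.Quotient.mk I u)) (c : R) :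
    IsUnit (Ideal.Quotient.mk I (phi p R u + p * c)) := by
  have h : Ideal.Quotient.mk I (phi p R u + p * c) =
      Ideal.Quotient.mk I u ^ p + p * Ideal.Quotient.mk I (δ (p := p) u + c) := by
    simp only [phi_apply, map_add, map_mul, map_pow, map_natCast]
    ring
  rw [h]
  exact (hu.pow p).add_of_mem_jacobson_bot (Ideal.mul_mem_right _ _ hp)

variable [Fact p.Prime]

theorem phi_add (x y : R) : phi p R (x + y) = phi p R x + phi p R y := by
  have hS : ∑ k ∈ Finset.Ioo 0 p, x ^ k * y ^ (p - k) * ((p.choose k / p : ℕ) : R)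
      = ∑ j ∈ Finset.Ioo 0 p, ((p.choose j / p : ℕ) : R) * x ^ (p - j) * y ^ j := by
    refine Finset.sum_nbij' (p - ·) (p - ·) ?_ ?_ ?_ ?_ ?_ <;>
      intro k hk <;> simp only [Finset.mem_Ioo] at hk ⊢ <;> try omega
    rw [Nat.sub_sub_self hk.2.le, Nat.choose_symm hk.2.le]
    ring
  simp only [phi_apply, δ_add, add_pow_prime_eq' Fact.out x y, hS]
  ring

variable (p R) in
def frobeniusLift : R →+* R where
  toFun := phi p R
  map_one' := by simp [phi_apply, δ_one]
  map_mul' x y := by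
    simp only [phi_apply, δ_mul, mul_pow]
    ring
  map_zero' := by simp [phi_apply, δ_zero, zero_pow (Fact.out : p.Prime).ne_zero]
  map_add' := phi_add

theorem frobeniusLift_apply (x : R) : frobeniusLift p R x = phi p R x := rfl

theorem exists_iterate_phi_succ_eq {d u : R} {m : ℕ} (hm : m ≠ 0)
    (h : (phi p R)^[m] d = d ^ p ^ m + p * u) :
    ∃ c : R, (phi p R)^[m + 1] d = d ^ p ^ (m + 1) + p * (phi p R u + p * c) := by
  -- `phi d ≡ d ^ p [mod p]`, so their `p ^ m`-th powers agree modulo `p ^ (m + 1)`.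
  obtain ⟨c, hc⟩ : (p : R) ^ 2 ∣ phi p R d ^ p ^ m - (d ^ p) ^ p ^ m :=
    (pow_dvd_pow _ (by omega)).trans (dvd_sub_pow_of_dvd_sub ⟨δ (p := p) d, by
      rw [phi_apply, add_sub_cancel_left]⟩ m)
  refine ⟨c, ?_⟩
  rw [← pow_mul, ← pow_succ'] at hc
  rw [Function.iterate_succ_apply', h, ← frobeniusLift_apply, map_add, map_mul, map_pow,
    map_natCast, frobeniusLift_apply, frobeniusLift_apply]
  linear_combination hc

theorem exists_iterate_phi_eq_pow_add_mul {I : Ideal R} (hp : (p : R ⧸ I) ∈ Ideal.jacobson ⊥)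
    {d : R} (hd : IsUnit (Ideal.Quotient.mk I (δ (p := p) d))) {n : ℕ} (hn : 1 ≤ n) :
    ∃ u : R, IsUnit (Ideal.Quotient.mk I u) ∧ (phi p R)^[n] d = d ^ p ^ n + p * u := by
  induction n, hn using Nat.le_induction with
  | base => exact ⟨δ (p := p) d, hd, by rw [Function.iterate_one, pow_one, phi_apply]⟩
  | succ m hm ih =>
    obtain ⟨u, hu, h⟩ := ih
    obtain ⟨c, hc⟩ := exists_iterate_phi_succ_eq (by omega) h
    exact ⟨_, isUnit_mk_phi_add_mul hp hu c, hc⟩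

end DeltaRing

/-- Let `A` be a `δ`-ring with `p` in the Jacobson radical and `d ∈ A`
weakly distinguished (`(d, δ(d)) = A`).  Then for every `n ≥ 1` there exists a unit `v` of
`A/(d)` such that `φⁿ(d) ≡ p·v (mod d)`.  More precisely, there exist elements `u ∈ A`
whose image in `A/(d)` is invertible with `φⁿ(d) − d^{pⁿ} = p·u`. -/
theorem stmt_11 (p : ℕ) [Fact p.Prime] (A : Type*) [CommRing A] [DeltaRing p A]
    (hp : (p : A) ∈ Ideal.jacobson (⊥ : Ideal A))
    (d : A) (hd : Ideal.span {d, DeltaRing.δ (p := p) d} = ⊤) :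
    ∀ n : ℕ, 1 ≤ n →
      (∃ v : A ⧸ Ideal.span {d}, IsUnit v ∧
        Ideal.Quotient.mk (Ideal.span {d}) ((DeltaRing.phi p A)^[n] d) = (p : A ⧸ Ideal.span {d}) * v) ∧
      (∃ u : A, IsUnit (Ideal.Quotient.mk (Ideal.span {d}) u) ∧
        (DeltaRing.phi p A)^[n] d - d ^ (p ^ n) = (p : A) * u) := by
  intro n hn
  have hpd : (p : A ⧸ Ideal.span {d}) ∈ Ideal.jacobson ⊥ := by
    simpa using Ideal.map_mem_jacobson_bot_of_surjective_s11 Ideal.Quotient.mk_surjective hp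
  obtain ⟨u, hu, hφ⟩ := DeltaRing.exists_iterate_phi_eq_pow_add_mul hpd
    (Ideal.Quotient.isUnit_mk_of_span_pair_eq_top_s11 hd) hn
  refine ⟨⟨_, hu, ?_⟩, ⟨u, hu, by rw [hφ, add_sub_cancel_left]⟩⟩
  rw [hφ, map_add, map_mul, map_pow,
    Ideal.Quotient.eq_zero_iff_mem.mpr (Ideal.mem_span_singleton_self d),
    zero_pow (pow_ne_zero n (Fact.out : p.Prime).ne_zero), zero_add, map_natCast]
end

section
/- Let C be an ∞-category (or 1-category) admitting finite coproducts, with initial object ∅, and let X, Y be objects. For any two maps g₀, g₁ : X → Y, the induced maps of Čech conerves X^• ⇉ Y^• (where Xⁿ = (n+1)-fold coproduct of X, Yⁿ = (n+1)-fold coproduct of Y) are simplicially homotopic; the homotopy is functorial in g₀ and g₁, and is the constant homotopy when X = Y and g₀ = g₁. -/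
open CategoryTheory CategoryTheory.Limits

universe v u

variable {C : Type u} [Category.{v} C] [HasFiniteCoproducts C]

/-- The `n`-th object of the Čech conerve of an object `X` (i.e. of `∅ → X`):
the `(n+1)`-fold coproduct `X^{⊔ (n+1)}`. -/
noncomputable def cechConerveObj (X : C) (n : SimplexCategory) : C :=
  ∐ fun _ : Fin (n.len + 1) => X

/-- The cosimplicial structure maps of the Čech conerve of `X`. -/
noncomputable def cechConerveMap (X : C) {m n : SimplexCategory} (α : m ⟶ n) :
    cechConerveObj X m ⟶ cechConerveObj X n :=
  Sigma.desc fun i => Sigma.ι (fun _ : Fin (n.len + 1) => X) (α.toOrderHom i)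

/-- The map of Čech conerves induced by a map `g : X ⟶ Y`. -/
noncomputable def cechConerveHom {X Y : C} (g : X ⟶ Y) (n : SimplexCategory) :
    cechConerveObj X n ⟶ cechConerveObj Y n :=
  Sigma.desc fun i => g ≫ Sigma.ι (fun _ : Fin (n.len + 1) => Y) i

/-- A *simplicial homotopy* between the maps of Čech conerves induced by `g₀, g₁ : X ⟶ Y`:
a map `h : δ*(X^•) → δ*(Y^•)` of `Δ_{/[1]}`-shaped diagrams (componentwise: for each `n`
and each `α : n → [1]` a map `h n α`, natural in `(n, α)`), restricting to the induced maps
`g₀^•`, `g₁^•` at the two vertices of `[1]`. -/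
structure CechConerveHomotopy {X Y : C} (g₀ g₁ : X ⟶ Y) where
  h : ∀ (n : SimplexCategory) (_ : n ⟶ SimplexCategory.mk 1),
    cechConerveObj X n ⟶ cechConerveObj Y n
  naturality : ∀ {m n : SimplexCategory} (β : m ⟶ n) (α : n ⟶ SimplexCategory.mk 1),
    cechConerveMap X β ≫ h n α = h m (β ≫ α) ≫ cechConerveMap Y β
  h_zero : ∀ n, h n (SimplexCategory.const n (SimplexCategory.mk 1) 0) = cechConerveHom g₀ n
  h_one : ∀ n, h n (SimplexCategory.const n (SimplexCategory.mk 1) 1) = cechConerveHom g₁ n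

/-!
At `α : [n] → [1]` the homotopy acts on the summand `i` of `X^{⊔ (n+1)}` by `g_{α i}`, landing in
the summand `i` of `Y^{⊔ (n+1)}`. Naturality holds because a structure map `β` moves the summand
`i` to `β i`, which lies over `α (β i) = (β ≫ α) i`. The same works over any `[k]`, with one map
`X ⟶ Y` per vertex.
-/

namespace CechConerve

noncomputable def ι (X : C) (n : SimplexCategory) (i : Fin (n.len + 1)) :
    X ⟶ cechConerveObj X n :=
  Sigma.ι (fun _ : Fin (n.len + 1) => X) i

lemma hom_ext {X Z : C} {n : SimplexCategory} {f f' : cechConerveObj X n ⟶ Z}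
    (h : ∀ i, ι X n i ≫ f = ι X n i ≫ f') : f = f' :=
  Sigma.hom_ext _ _ h

@[simp]
lemma ι_map (X : C) {m n : SimplexCategory} (β : m ⟶ n) (i : Fin (m.len + 1)) :
    ι X m i ≫ cechConerveMap X β = ι X n (β.toOrderHom i) :=
  Sigma.ι_desc _ _

@[simp]
lemma ι_map_assoc (X : C) {m n : SimplexCategory} (β : m ⟶ n) (i : Fin (m.len + 1)) {Z : C}
    (f : cechConerveObj X n ⟶ Z) :
    ι X m i ≫ cechConerveMap X β ≫ f = ι X n (β.toOrderHom i) ≫ f := by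
  rw [← Category.assoc, ι_map]

@[simp]
lemma ι_hom {X Y : C} (g : X ⟶ Y) (n : SimplexCategory) (i : Fin (n.len + 1)) :
    ι X n i ≫ cechConerveHom g n = g ≫ ι Y n i :=
  Sigma.ι_desc _ _

@[simp]
lemma ι_hom_assoc {X Y : C} (g : X ⟶ Y) (n : SimplexCategory) (i : Fin (n.len + 1)) {Z : C}
    (f : cechConerveObj Y n ⟶ Z) :
    ι X n i ≫ cechConerveHom g n ≫ f = g ≫ ι Y n i ≫ f := by
  rw [← Category.assoc, ι_hom, Category.assoc]

variable {X Y : C} {k : ℕ}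

noncomputable def homOver (g : Fin (k + 1) → (X ⟶ Y)) (n : SimplexCategory)
    (α : n ⟶ SimplexCategory.mk k) : cechConerveObj X n ⟶ cechConerveObj Y n :=
  Sigma.desc fun i => g (α.toOrderHom i) ≫ ι Y n i

@[simp]
lemma ι_homOver (g : Fin (k + 1) → (X ⟶ Y)) (n : SimplexCategory)
    (α : n ⟶ SimplexCategory.mk k) (i : Fin (n.len + 1)) :
    ι X n i ≫ homOver g n α = g (α.toOrderHom i) ≫ ι Y n i :=
  Sigma.ι_desc _ _

@[simp]
lemma ι_homOver_assoc (g : Fin (k + 1) → (X ⟶ Y)) (n : SimplexCategory)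
    (α : n ⟶ SimplexCategory.mk k) (i : Fin (n.len + 1)) {Z : C} (f : cechConerveObj Y n ⟶ Z) :
    ι X n i ≫ homOver g n α ≫ f = g (α.toOrderHom i) ≫ ι Y n i ≫ f := by
  rw [← Category.assoc, ι_homOver, Category.assoc]

lemma map_comp_homOver (g : Fin (k + 1) → (X ⟶ Y)) {m n : SimplexCategory} (β : m ⟶ n)
    (α : n ⟶ SimplexCategory.mk k) :
    cechConerveMap X β ≫ homOver g n α = homOver g m (β ≫ α) ≫ cechConerveMap Y β :=
  hom_ext fun i => by simp

lemma homOver_const (g : Fin (k + 1) → (X ⟶ Y)) (n : SimplexCategory) (j : Fin (k + 1)) :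
    homOver g n (SimplexCategory.const n (SimplexCategory.mk k) j) = cechConerveHom (g j) n :=
  hom_ext fun i => by simp

lemma homOver_of_forall_eq {g : Fin (k + 1) → (X ⟶ Y)} {f : X ⟶ Y} (hg : ∀ j, g j = f)
    (n : SimplexCategory) (α : n ⟶ SimplexCategory.mk k) :
    homOver g n α = cechConerveHom f n :=
  hom_ext fun i => by simp [hg]

lemma homOver_comp_hom {X' Y' : C} {g : Fin (k + 1) → (X ⟶ Y)} {g' : Fin (k + 1) → (X' ⟶ Y')}
    {a : X ⟶ X'} {b : Y ⟶ Y'} (w : ∀ j, g j ≫ b = a ≫ g' j)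
    (n : SimplexCategory) (α : n ⟶ SimplexCategory.mk k) :
    homOver g n α ≫ cechConerveHom b n = cechConerveHom a n ≫ homOver g' n α :=
  hom_ext fun i => by simp [reassoc_of% w]

noncomputable def homotopy (g₀ g₁ : X ⟶ Y) : CechConerveHomotopy g₀ g₁ where
  h := homOver ![g₀, g₁]
  naturality := map_comp_homOver _
  h_zero n := homOver_const _ n 0
  h_one n := homOver_const _ n 1

end CechConerve

/-- Let `C` be a category admitting finite coproducts, `X, Y` objects and
`g₀, g₁ : X ⟶ Y` two maps.  Then the induced maps of Čech conerves `X^• ⇉ Y^•` are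
simplicially homotopic; moreover the homotopy can be chosen functorially in `(g₀, g₁)`
(it is compatible with all commuting squares), and to be the constant homotopy (induced by
`g` itself) when `g₀ = g₁ = g` — in particular constant when `X = Y` and `g₀ = g₁`. -/
theorem stmt_15 :
    ∃ H : ∀ (X Y : C) (g₀ g₁ : X ⟶ Y), CechConerveHomotopy g₀ g₁,
      (∀ (X Y : C) (g : X ⟶ Y) (n : SimplexCategory) (α : n ⟶ SimplexCategory.mk 1),
        (H X Y g g).h n α = cechConerveHom g n) ∧
      (∀ (X Y X' Y' : C) (g₀ g₁ : X ⟶ Y) (g₀' g₁' : X' ⟶ Y') (a : X ⟶ X') (b : Y ⟶ Y'),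
        g₀ ≫ b = a ≫ g₀' → g₁ ≫ b = a ≫ g₁' →
        ∀ (n : SimplexCategory) (α : n ⟶ SimplexCategory.mk 1),
          (H X Y g₀ g₁).h n α ≫ cechConerveHom b n =
            cechConerveHom a n ≫ (H X' Y' g₀' g₁').h n α) :=
  ⟨fun _ _ g₀ g₁ => CechConerve.homotopy g₀ g₁,
    fun _ _ _ => CechConerve.homOver_of_forall_eq (Fin.forall_fin_two.2 ⟨rfl, rfl⟩),
    fun _ _ _ _ _ _ _ _ _ _ h₀ h₁ =>
      CechConerve.homOver_comp_hom (Fin.forall_fin_two.2 ⟨h₀, h₁⟩)⟩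
end

section
/- Let C be an ∞-category, X^• and Y^• cosimplicial objects whose totalizations exist, and f, g : X^• → Y^• two maps of cosimplicial objects related by a simplicial homotopy. Then f and g induce equivalent (homotopic) maps lim_Δ X^• → lim_Δ Y^• on totalizations. Key ingredient: the forgetful functor δ : Δ_{/[1]} → Δ is coinitial (its opposite is cofinal), since for every [n] the category Δ_{/[1]} ×_Δ Δ_{/[n]} has weakly contractible nerve (geometric realization Δ¹ × Δⁿ). -/
open CategoryTheory CategoryTheory.Limits

/-- A *simplicial homotopy* between two maps `f, g : X → Y` of cosimplicial objects: a map
`h : δ*(X) → δ*(Y)` of `Δ_{/[1]}`-shaped diagrams (encoded componentwise: for each object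
`n` of `Δ` and each structure map `α : n → [1]` a map `h n α : X(n) → Y(n)`, natural in
`(n, α)`), whose restrictions along the two sections of `δ : Δ_{/[1]} → Δ` (the two
vertices `0, 1` of `[1]`) recover `f` and `g` respectively. -/
structure CosimplicialHomotopy {C : Type*} [Category C]
    (X Y : SimplexCategory ⥤ C) (f g : X ⟶ Y) where
  h : ∀ (n : SimplexCategory) (_ : n ⟶ SimplexCategory.mk 1), X.obj n ⟶ Y.obj n
  naturality : ∀ {m n : SimplexCategory} (β : m ⟶ n) (α : n ⟶ SimplexCategory.mk 1),
    X.map β ≫ h n α = h m (β ≫ α) ≫ Y.map β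
  h_zero : ∀ n : SimplexCategory, h n (SimplexCategory.const n (SimplexCategory.mk 1) 0) = f.app n
  h_one : ∀ n : SimplexCategory, h n (SimplexCategory.const n (SimplexCategory.mk 1) 1) = g.app n

/-- Let `C` be a category, `X` and `Y` cosimplicial objects of `C` whose
totalizations (limits over `Δ`) exist, and `f, g : X → Y` two maps of cosimplicial objects
related by a simplicial homotopy.  Then `f` and `g` induce the same map
`lim_Δ X → lim_Δ Y` on totalizations.  (The key ingredient is that the forgetful functor
`δ : Δ_{/[1]} → Δ` is coinitial, since for every `[n]` the relevant comma category has
weakly contractible nerve, its geometric realization being `Δ¹ × Δⁿ`.) -/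
theorem stmt_16 {C : Type*} [Category C] (X Y : SimplexCategory ⥤ C)
    [HasLimit X] [HasLimit Y] (f g : X ⟶ Y)
    (h : CosimplicialHomotopy X Y f g) :
    limMap f = limMap g := by
  -- notation for the two vertices `ι 0, ι 1 : [0] ⟶ [1]` and the codegeneracy `σ : [1] ⟶ [0]`
  set z := SimplexCategory.mk 0 with hzdef
  let ι : Fin 2 → (z ⟶ SimplexCategory.mk 1) := fun i => SimplexCategory.const _ _ i
  let σ : SimplexCategory.mk 1 ⟶ z := SimplexCategory.const _ _ 0
  have hισ : ∀ i, ι i ≫ σ = 𝟙 z := by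
    intro i
    rw [SimplexCategory.const_comp]
    exact SimplexCategory.const_eq_id
  -- key computation at `[0]`: both `π ≫ f.app [0]` and `π ≫ g.app [0]` equal
  -- `π [1] ≫ h [1] (𝟙 [1]) ≫ Y.map σ`
  have key : ∀ i : Fin 2, limit.π X z ≫ h.h z (ι i) =
      limit.π X (SimplexCategory.mk 1) ≫ h.h _ (𝟙 _) ≫ Y.map σ := by
    intro i
    have nat := h.naturality (ι i) (𝟙 (SimplexCategory.mk 1))
    rw [Category.comp_id] at nat
    calc limit.π X z ≫ h.h z (ι i)
        = limit.π X z ≫ h.h z (ι i) ≫ Y.map (ι i ≫ σ) := by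
          rw [hισ, Y.map_id, Category.comp_id]
      _ = limit.π X z ≫ (h.h z (ι i) ≫ Y.map (ι i)) ≫ Y.map σ := by
          rw [Y.map_comp, Category.assoc]
      _ = limit.π X z ≫ (X.map (ι i) ≫ h.h _ (𝟙 _)) ≫ Y.map σ := by rw [nat]
      _ = limit.π X (SimplexCategory.mk 1) ≫ h.h _ (𝟙 _) ≫ Y.map σ := by
          rw [← Category.assoc, ← Category.assoc, limit.w, Category.assoc]
  have hz : limit.π X z ≫ f.app z = limit.π X z ≫ g.app z := by
    rw [← h.h_zero, ← h.h_one]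
    exact (key 0).trans (key 1).symm
  ext j
  have β : z ⟶ j := SimplexCategory.const _ _ 0
  rw [limMap_π, limMap_π, ← limit.w X β, Category.assoc, Category.assoc,
    f.naturality, g.naturality, ← Category.assoc, ← Category.assoc, hz]
end
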